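/- There exists a constant C > 0 such that for every real k ≥ 1 and every real s ≥ 0, one has h_k(s)² ≤ C·(1 + |g_k(s)|). -/

import Mathlib

open Real intervalIntegral

/-- Truncation `T_k(s) = max(0, min(k, s))`. -/
noncomputable def Tk (k s : ℝ) : ℝ := max 0 (min k s)

/-- `g_k(s) = ∫₀ˢ (∫₁ʸ dz / T_k(z)) dy`. -/
noncomputable def gk (k s : ℝ) : ℝ := ∫ y in (0:ℝ)..s, ∫ z in (1:ℝ)..y, 1 / Tk k z

/-- `h_k(s) = ∫₀ˢ dz / √(T_k(z))`. -/
noncomputable def hk (k s : ℝ) : ℝ := ∫ z in (0:ℝ)..s, 1 / Real.sqrt (Tk k z)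

/-!
Both integrals are elementary. For `s ≤ k` one has `h = 2√s` and `g = s log s - s`; for
`s = k + t ≥ k` one has `h = 2√k + t/√k` and `g = k log k - k + t log k + t²/(2k)`.
The tangent line of the convex function `x log x - x` at `x = 2`, together with `log 2 > 1/2`,
gives `x ≤ 2 (x log x - x + 2)`. This bounds `h² = 4s` by `8 (2 + g)` in the first regime; in the
second, `h² = 4k + 4t + t²/k ≤ 8k + 2t²/k` by AM-GM, and both terms are controlled by `g`.
Finally `2 + g ≤ 2 (1 + |g|)`.
-/

open Set MeasureTheory

theorem intervalIntegral.integral_eq_add_of_eqOn_Ioo {f g : ℝ → ℝ} {a b c : ℝ} (hbc : b ≤ c)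
    (hf : IntervalIntegrable f volume a b) (hg : IntervalIntegrable g volume b c)
    (hfg : EqOn f g (Ioo b c)) :
    ∫ x in a..c, f x = (∫ x in a..b, f x) + ∫ x in b..c, g x := by
  have hfg' : EqOn g f (uIoo b c) := by rw [uIoo_of_le hbc]; exact hfg.symm
  rw [← integral_add_adjacent_intervals hf (hg.congr_uIoo hfg'),
    integral_congr_Ioo_of_le hbc hfg]

theorem Tk_of_le {k z : ℝ} (hz : 0 ≤ z) (hzk : z ≤ k) : Tk k z = z := by
  rw [Tk, min_eq_right hzk, max_eq_right hz]

theorem Tk_of_ge {k z : ℝ} (hk : 0 ≤ k) (hkz : k ≤ z) : Tk k z = k := by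
  rw [Tk, min_eq_left hkz, max_eq_right hk]

theorem Tk_pos {k z : ℝ} (hk : 0 < k) (hz : 0 < z) : 0 < Tk k z :=
  lt_max_of_lt_right (lt_min hk hz)

theorem continuous_Tk (k : ℝ) : Continuous (Tk k) := by
  unfold Tk; fun_prop

theorem intervalIntegrable_one_div_Tk {k a b : ℝ} (hk : 0 < k) (ha : 0 < a) (hb : 0 < b) :
    IntervalIntegrable (fun z => 1 / Tk k z) volume a b :=
  ContinuousOn.intervalIntegrable fun _ hz =>
    continuousAt_const.div (continuous_Tk k).continuousAt
      (Tk_pos hk (lt_of_lt_of_le (lt_min ha hb) hz.1)).ne' |>.continuousWithinAt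

theorem eqOn_one_div_sqrt_Tk {k s : ℝ} (hsk : s ≤ k) :
    EqOn (fun z => 1 / √(Tk k z)) (fun z => z ^ (-1 / 2 : ℝ)) (Ioo 0 s) := fun z hz => by
  simp only
  rw [Tk_of_le hz.1.le (hz.2.le.trans hsk), sqrt_eq_rpow, one_div, ← rpow_neg hz.1.le]
  norm_num

theorem intervalIntegrable_one_div_sqrt_Tk_of_le {k s : ℝ} (hs : 0 ≤ s) (hsk : s ≤ k) :
    IntervalIntegrable (fun z => 1 / √(Tk k z)) volume 0 s :=
  (intervalIntegrable_rpow' (by norm_num)).congr_uIoo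
    (uIoo_of_le hs ▸ (eqOn_one_div_sqrt_Tk hsk).symm)

theorem hk_of_le {k s : ℝ} (hs : 0 ≤ s) (hsk : s ≤ k) : hk k s = 2 * √s := by
  rw [hk, integral_congr_Ioo_of_le hs (eqOn_one_div_sqrt_Tk hsk),
    integral_rpow (Or.inl (by norm_num)), zero_rpow (by norm_num), sqrt_eq_rpow]
  norm_num
  ring

theorem hk_of_ge {k s : ℝ} (hk0 : 0 < k) (hks : k ≤ s) :
    hk k s = 2 * √k + (s - k) / √k := by
  rw [hk, integral_eq_add_of_eqOn_Ioo (g := fun _ => 1 / √k) hks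
      (intervalIntegrable_one_div_sqrt_Tk_of_le hk0.le le_rfl) intervalIntegrable_const
      (fun _ hz => by simp only [Tk_of_ge hk0.le hz.1.le]),
    ← hk, hk_of_le hk0.le le_rfl, intervalIntegral.integral_const, smul_eq_mul]
  ring

theorem integral_one_div_Tk_of_le {k y : ℝ} (hk1 : 1 ≤ k) (hy : 0 < y) (hyk : y ≤ k) :
    ∫ z in (1:ℝ)..y, 1 / Tk k z = log y := by
  rw [integral_congr_uIoo (g := fun z => 1 / z), integral_one_div_of_pos one_pos hy, div_one]
  intro z hz
  rw [uIoo, mem_Ioo] at hz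
  simp only [Tk_of_le (lt_of_le_of_lt (le_min zero_le_one hy.le) hz.1).le
    (hz.2.le.trans (max_le hk1 hyk))]

theorem integral_one_div_Tk_of_ge {k y : ℝ} (hk1 : 1 ≤ k) (hky : k ≤ y) :
    ∫ z in (1:ℝ)..y, 1 / Tk k z = log k + (y - k) / k := by
  have hk0 : 0 < k := one_pos.trans_le hk1
  rw [integral_eq_add_of_eqOn_Ioo (g := fun _ => 1 / k) hky
      (intervalIntegrable_one_div_Tk hk0 one_pos hk0) intervalIntegrable_const
      (fun _ hz => by simp only [Tk_of_ge hk0.le hz.1.le]),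
    integral_one_div_Tk_of_le hk1 hk0 le_rfl, intervalIntegral.integral_const, smul_eq_mul]
  ring

theorem eqOn_integral_one_div_Tk_log {k s : ℝ} (hk1 : 1 ≤ k) (hsk : s ≤ k) :
    EqOn (fun y => ∫ z in (1:ℝ)..y, 1 / Tk k z) log (Ioo 0 s) := fun _ hy =>
  integral_one_div_Tk_of_le hk1 hy.1 (hy.2.le.trans hsk)

theorem gk_of_le {k s : ℝ} (hk1 : 1 ≤ k) (hs : 0 ≤ s) (hsk : s ≤ k) :
    gk k s = s * log s - s := by
  rw [gk, integral_congr_Ioo_of_le hs (eqOn_integral_one_div_Tk_log hk1 hsk), integral_log]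
  simp

theorem gk_of_ge {k s : ℝ} (hk1 : 1 ≤ k) (hks : k ≤ s) :
    gk k s = k * log k - k + (s - k) * log k + (s - k) ^ 2 / (2 * k) := by
  have hk0 : 0 < k := one_pos.trans_le hk1
  rw [gk, integral_eq_add_of_eqOn_Ioo (g := fun y => log k + (y - k) / k) hks
      (intervalIntegrable_log'.congr_uIoo
        (uIoo_of_le hk0.le ▸ (eqOn_integral_one_div_Tk_log hk1 le_rfl).symm))
      (by apply Continuous.intervalIntegrable; fun_prop)
      (fun _ hy => integral_one_div_Tk_of_ge hk1 hy.1.le),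
    ← gk, gk_of_le hk1 hk0.le le_rfl,
    integral_add intervalIntegrable_const (by apply Continuous.intervalIntegrable; fun_prop),
    intervalIntegral.integral_div, integral_comp_sub_right (fun y => y), integral_id,
    intervalIntegral.integral_const, smul_eq_mul]
  ring

theorem le_two_mul_mul_log_sub_add_two {x : ℝ} (hx : 0 ≤ x) : x ≤ 2 * (x * log x - x + 2) := by
  rcases hx.eq_or_lt with rfl | hx
  · norm_num
  have tangent : log (2 / x) ≤ 2 / x - 1 := log_le_sub_one_of_pos (by positivity)
  rw [log_div two_ne_zero hx.ne'] at tangent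
  have := mul_le_mul_of_nonneg_left tangent hx.le
  rw [mul_sub, mul_sub, mul_div_cancel₀ 2 hx.ne'] at this
  have : x / 2 ≤ x * log 2 := by nlinarith [log_two_gt_d9]
  linarith

theorem sq_hk_le {k s : ℝ} (hk1 : 1 ≤ k) (hs : 0 ≤ s) : hk k s ^ 2 ≤ 16 * (2 + gk k s) := by
  have hk0 : 0 < k := one_pos.trans_le hk1
  rcases le_total s k with hsk | hks
  · rw [hk_of_le hs hsk, gk_of_le hk1 hs hsk, mul_pow, sq_sqrt hs]
    linarith [le_two_mul_mul_log_sub_add_two hs]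
  · rw [hk_of_ge hk0 hks, gk_of_ge hk1 hks]
    set t := s - k
    have hsq : (2 * √k + t / √k) ^ 2 = 4 * k + 4 * t + t ^ 2 / k := by
      rw [add_sq, div_pow, mul_pow, sq_sqrt hk0.le]
      field_simp
      ring
    have amgm : 4 * t ≤ 4 * k + t ^ 2 / k := by
      rw [← sub_nonneg, show 4 * k + t ^ 2 / k - 4 * t = (t - 2 * k) ^ 2 / k by field_simp; ring]
      positivity
    have hlog : 0 ≤ t * log k := mul_nonneg (sub_nonneg.2 hks) (log_nonneg hk1)
    have hquad : 0 ≤ t ^ 2 / (2 * k) := by positivity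
    have hhalf : t ^ 2 / k = 2 * (t ^ 2 / (2 * k)) := by field_simp
    rw [hsq]
    linarith [le_two_mul_mul_log_sub_add_two hk0.le]

theorem stmt_4 :
    ∃ C : ℝ, 0 < C ∧ ∀ k : ℝ, 1 ≤ k → ∀ s : ℝ, 0 ≤ s →
      (hk k s) ^ 2 ≤ C * (1 + |gk k s|) := by
  refine ⟨32, by norm_num, fun k hk1 s hs => ?_⟩
  linarith [sq_hk_le hk1 hs, le_abs_self (gk k s), abs_nonneg (gk k s)]
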